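/- In the two-arm windowed setting where E[μ̂_k(n)] ≤ E[μ̂_{k′}(n)] − Δ for n ∈ Λ, with Λ ⊆ ∪_s Λ(s), t_k(n) ≥ εs and t_{k′}(n) ≥ εs for n ∈ Λ(s), and |Λ(s) ∩ [n₀, n₀+τ]| ≤ 1, one has E[Σ_{n=n₀}^{n₀+τ} 1{n ∈ Λ, μ̂_k(n) > μ̂_{k′}(n)}] ≤ 4·log(τ)/(εΔ²) + 4. -/

import Mathlib

/-!
If round `n ∈ Λ(s)` is bad (`μ̂_k(n) > μ̂_{k'}(n)` although the conditional window means are `Δ`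
apart), then one of the two arms has a window deviation of at least `Δ/2` times its count of
selections, which is at least `εs`. Since the selections are predictable and the rewards are
independent, Hoeffding's lemma makes `exp (c M - c² V / 8)` (selected deviations `M`, selection
count `V`) a supermartingale, so each such event has probability at most `e² e^{-as}`,
`a = εΔ²/2`; the factor `e²` pays for round `0`, whose selection is not predictable. As `Λ(s)` meets
the window at most once, the expected number of bad rounds is at most
`∑ₛ min(1, 2e²(τ+1) e^{-as}) ≤ (log(2e²(τ+1)) + 1)/a + 1`. Together with the trivial bound `τ + 1`
this is at most `2 log τ / a + 4`.
-/

open MeasureTheory ProbabilityTheory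
open scoped Classical ENNReal

open Real Finset

section

variable {Ω : Type*} {mΩ : MeasurableSpace Ω} {P : Measure Ω}

lemma integral_mem_Icc_zero_one [IsProbabilityMeasure P] {X : Ω → ℝ}
    (hX : ∀ ω, X ω ∈ Set.Icc (0 : ℝ) 1) : P[X] ∈ Set.Icc (0 : ℝ) 1 := by
  refine ⟨integral_nonneg fun ω => (hX ω).1, (le_abs_self _).trans ?_⟩
  simpa [← Real.norm_eq_abs] using norm_integral_le_of_norm_le_const (μ := P) (C := 1)
    (ae_of_all _ fun ω => by rw [Real.norm_eq_abs, abs_of_nonneg (hX ω).1]; exact (hX ω).2)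

lemma lintegral_exp_mul_sub_integral_le_one [IsProbabilityMeasure P] {X : Ω → ℝ}
    (hX : Measurable X) (hXb : ∀ ω, X ω ∈ Set.Icc (0 : ℝ) 1) (c : ℝ) :
    ∫⁻ ω, ENNReal.ofReal (exp (c * (X ω - P[X]) - c ^ 2 / 8)) ∂P ≤ 1 := by
  have hsub := hasSubgaussianMGF_of_mem_Icc hX.aemeasurable (ae_of_all P hXb)
  have hmgf : mgf (fun ω => X ω - P[X]) P c ≤ exp (c ^ 2 / 8) := by
    convert hsub.mgf_le c using 2
    norm_num
    ring
  have hsplit : ∀ ω, exp (c * (X ω - P[X]) - c ^ 2 / 8)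
      = exp (c * (X ω - P[X])) * exp (-(c ^ 2 / 8)) := fun ω => by
    rw [← exp_add, sub_eq_add_neg]
  simp_rw [hsplit]
  rw [← ofReal_integral_eq_lintegral_ofReal ((hsub.integrable_exp_mul c).mul_const _)
    (ae_of_all _ fun _ => by positivity), integral_mul_const, ← ENNReal.ofReal_one]
  refine ENNReal.ofReal_le_ofReal ?_
  calc mgf (fun ω => X ω - P[X]) P c * exp (-(c ^ 2 / 8))
      ≤ exp (c ^ 2 / 8) * exp (-(c ^ 2 / 8)) := by gcongr
    _ = 1 := by rw [← exp_add, add_neg_cancel, exp_zero]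

lemma exp_mul_le_one_sub_add_mul_exp {b x : ℝ} (hb : b ∈ Set.Icc (0 : ℝ) 1) :
    exp (b * x) ≤ 1 - b + b * exp x := by
  simpa using convexOn_exp.2 (Set.mem_univ 0) (Set.mem_univ x) (sub_nonneg.2 hb.2) hb.1
    (sub_add_cancel 1 b)

lemma lintegral_mul_exp_mul_le {m m' : MeasurableSpace Ω} (hm : m ≤ mΩ) (hm' : m' ≤ mΩ)
    (hind : Indep m m' P) {f : Ω → ℝ≥0∞} {b ξ : Ω → ℝ} (hf : Measurable[m] f)
    (hb : Measurable[m] b) (hb01 : ∀ ω, b ω ∈ Set.Icc (0 : ℝ) 1) (hξ : Measurable[m'] ξ)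
    (hξ1 : ∫⁻ ω, ENNReal.ofReal (exp (ξ ω)) ∂P ≤ 1) :
    ∫⁻ ω, f ω * ENNReal.ofReal (exp (b ω * ξ ω)) ∂P ≤ ∫⁻ ω, f ω ∂P := by
  have hfb : Measurable[m] fun ω => f ω * ENNReal.ofReal (b ω) := hf.mul hb.ennreal_ofReal
  have hf1b : Measurable[mΩ] fun ω => f ω * ENNReal.ofReal (1 - b ω) :=
    (hf.mul (measurable_const.sub hb).ennreal_ofReal).mono hm le_rfl
  have hconv : ∀ ω, f ω * ENNReal.ofReal (exp (b ω * ξ ω)) ≤ f ω * ENNReal.ofReal (1 - b ω)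
      + f ω * ENNReal.ofReal (b ω) * ENNReal.ofReal (exp (ξ ω)) := fun ω => by
    rw [mul_assoc, ← mul_add, ← ENNReal.ofReal_mul (hb01 ω).1,
      ← ENNReal.ofReal_add (sub_nonneg.2 (hb01 ω).2) (by have := (hb01 ω).1; positivity)]
    gcongr
    exact exp_mul_le_one_sub_add_mul_exp (hb01 ω)
  calc ∫⁻ ω, f ω * ENNReal.ofReal (exp (b ω * ξ ω)) ∂P
      ≤ ∫⁻ ω, f ω * ENNReal.ofReal (1 - b ω)
          + f ω * ENNReal.ofReal (b ω) * ENNReal.ofReal (exp (ξ ω)) ∂P := lintegral_mono hconv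
    _ = ∫⁻ ω, f ω * ENNReal.ofReal (1 - b ω) ∂P
          + (∫⁻ ω, f ω * ENNReal.ofReal (b ω) ∂P) * ∫⁻ ω, ENNReal.ofReal (exp (ξ ω)) ∂P := by
      rw [lintegral_add_left hf1b,
        lintegral_mul_eq_lintegral_mul_lintegral_of_independent_measurableSpace
          (g := fun ω => ENNReal.ofReal (exp (ξ ω))) hm hm' hind hfb hξ.exp.ennreal_ofReal]
    _ ≤ ∫⁻ ω, f ω * ENNReal.ofReal (1 - b ω) ∂P + ∫⁻ ω, f ω * ENNReal.ofReal (b ω) ∂P := by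
      gcongr
      exact mul_le_of_le_one_right' hξ1
    _ = ∫⁻ ω, f ω ∂P := by
      rw [← lintegral_add_left hf1b]
      congr with ω
      rw [← mul_add, ← ENNReal.ofReal_add (sub_nonneg.2 (hb01 ω).2) (hb01 ω).1, sub_add_cancel,
        ENNReal.ofReal_one, mul_one]

/-- `exp` of this is Hoeffding's exponential supermartingale of the samples `X t` selected by
`B t`. -/
noncomputable def hoeffdingExponent (B X : ℕ → Ω → ℝ) (μ : ℕ → ℝ) (c : ℝ) (I : Finset ℕ)
    (ω : Ω) : ℝ :=
  ∑ t ∈ I, B t ω * (c * (X t ω - μ t) - c ^ 2 / 8)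

lemma measurable_hoeffdingExponent {m : MeasurableSpace Ω} {B X : ℕ → Ω → ℝ} {I : Finset ℕ}
    (hB : ∀ t ∈ I, Measurable[m] (B t)) (hX : ∀ t ∈ I, Measurable[m] (X t)) (μ : ℕ → ℝ)
    (c : ℝ) : Measurable[m] (hoeffdingExponent B X μ c I) :=
  Finset.measurable_sum _ fun t ht =>
    (hB t ht).mul ((((hX t ht).sub_const _).const_mul c).sub_const _)

lemma lintegral_exp_hoeffdingExponent_le_one [IsProbabilityMeasure P] (𝓕 : Filtration ℕ mΩ)
    {B X : ℕ → Ω → ℝ} (hB : ∀ t ω, B t ω ∈ Set.Icc (0 : ℝ) 1)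
    (hBm : ∀ t, Measurable[𝓕 t] (B (t + 1))) (hXm : ∀ t, Measurable[𝓕 t] (X t))
    (hXb : ∀ t ω, X t ω ∈ Set.Icc (0 : ℝ) 1)
    (hind : ∀ t, Indep (𝓕 t) (MeasurableSpace.comap (X (t + 1)) inferInstance) P)
    (c : ℝ) {I : Finset ℕ} (hI0 : 0 ∉ I) :
    ∫⁻ ω, ENNReal.ofReal (exp (hoeffdingExponent B X (fun t => P[X t]) c I ω)) ∂P ≤ 1 := by
  set μ : ℕ → ℝ := fun t => P[X t]
  induction I using Finset.induction_on_max with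
  | empty => simp [hoeffdingExponent]
  | insert a I hlt ih =>
    obtain ⟨k, rfl⟩ := Nat.exists_eq_add_one_of_ne_zero fun h => hI0 (h ▸ mem_insert_self a I)
    have hI0' : 0 ∉ I := fun h => hI0 (mem_insert_of_mem h)
    have hpast : ∀ t ∈ I, Measurable[𝓕 k] (B t) ∧ Measurable[𝓕 k] (X t) := fun t ht => by
      obtain ⟨j, rfl⟩ := Nat.exists_eq_add_one_of_ne_zero (ne_of_mem_of_not_mem ht hI0')
      have hjk : j + 1 ≤ k := Nat.lt_succ_iff.1 (hlt _ ht)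
      exact ⟨(hBm j).mono (𝓕.mono (by omega)) le_rfl, (hXm _).mono (𝓕.mono hjk) le_rfl⟩
    set ξ : Ω → ℝ := fun ω => c * (X (k + 1) ω - μ (k + 1)) - c ^ 2 / 8
    have hξ : Measurable[MeasurableSpace.comap (X (k + 1)) inferInstance] ξ :=
      ((Measurable.of_comap_le le_rfl).sub_const _).const_mul c |>.sub_const _
    calc ∫⁻ ω, ENNReal.ofReal (exp (hoeffdingExponent B X μ c (insert (k + 1) I) ω)) ∂P
        = ∫⁻ ω, ENNReal.ofReal (exp (hoeffdingExponent B X μ c I ω))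
            * ENNReal.ofReal (exp (B (k + 1) ω * ξ ω)) ∂P := by
          simp only [hoeffdingExponent, sum_insert fun h => (hlt _ h).false,
            add_comm _ (∑ _ ∈ I, _), exp_add, ENNReal.ofReal_mul (exp_pos _).le, ξ]
      _ ≤ ∫⁻ ω, ENNReal.ofReal (exp (hoeffdingExponent B X μ c I ω)) ∂P :=
          lintegral_mul_exp_mul_le (𝓕.le k) ((hXm _).comap_le.trans (𝓕.le _)) (hind k)
            (measurable_hoeffdingExponent (fun t ht => (hpast t ht).1)
              (fun t ht => (hpast t ht).2) μ c).exp.ennreal_ofReal (hBm k) (hB _) hξ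
            (lintegral_exp_mul_sub_integral_le_one ((hXm _).mono (𝓕.le _) le_rfl) (hXb _) c)
      _ ≤ 1 := ih hI0'

lemma hoeffdingExponent_le_erase_zero_add_two {B X : ℕ → Ω → ℝ} {μ : ℕ → ℝ} {ω : Ω}
    (hB0 : B 0 ω ∈ Set.Icc (0 : ℝ) 1) (hX0 : X 0 ω ∈ Set.Icc (0 : ℝ) 1)
    (hμ0 : μ 0 ∈ Set.Icc (0 : ℝ) 1) (c : ℝ) (I : Finset ℕ) :
    hoeffdingExponent B X μ c I ω ≤ hoeffdingExponent B X μ c (I.erase 0) ω + 2 := by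
  unfold hoeffdingExponent
  by_cases h0 : 0 ∈ I
  · rw [← add_sum_erase I _ h0, add_comm]
    gcongr
    have hdev : c * (X 0 ω - μ 0) ≤ |c| := by
      rw [abs_eq_max_neg]
      rcases le_total 0 c with hc | hc
      · nlinarith [hX0.1, hX0.2, hμ0.1, hμ0.2, le_max_left c (-c)]
      · nlinarith [hX0.1, hX0.2, hμ0.1, hμ0.2, le_max_right c (-c)]
    -- `|c| - c ^ 2 / 8` is at most `2`, attained at `|c| = 4`
    nlinarith [hB0.1, hB0.2, sq_nonneg (|c| - 4), sq_abs c]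
  · rw [erase_eq_of_notMem h0]
    linarith

lemma sq_mul_le_hoeffdingExponent {B X : ℕ → Ω → ℝ} {μ : ℕ → ℝ} {ω : Ω} {c v : ℝ}
    {I : Finset ℕ} (hv : v ≤ ∑ t ∈ I, B t ω)
    (hdev : c ^ 2 / 4 * ∑ t ∈ I, B t ω ≤ c * ∑ t ∈ I, B t ω * (X t ω - μ t)) :
    c ^ 2 * v / 8 ≤ hoeffdingExponent B X μ c I ω := by
  have h : hoeffdingExponent B X μ c I ω
      = c * ∑ t ∈ I, B t ω * (X t ω - μ t) - c ^ 2 / 8 * ∑ t ∈ I, B t ω := by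
    simp only [hoeffdingExponent, mul_sum, ← sum_sub_distrib]
    exact sum_congr rfl fun t _ => by ring
  rw [h]
  nlinarith [sq_nonneg c]

lemma sum_Icc_sub_le_add_one {B : ℕ → ℝ} (hB : ∀ t, B t ≤ 1) (n τ : ℕ) :
    ∑ t ∈ Icc (n - τ) n, B t ≤ τ + 1 := by
  refine (sum_le_card_nsmul _ _ 1 fun t _ => hB t).trans ?_
  rw [nsmul_one, Nat.card_Icc]
  exact_mod_cast (by omega : n + 1 - (n - τ) ≤ τ + 1)

/-- The windowed empirical mean `μ̂` of the statement, `0` when nothing is selected. -/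
noncomputable def weightedMean (w x : ℕ → ℝ) (I : Finset ℕ) : ℝ :=
  if 0 < ∑ t ∈ I, w t then (∑ t ∈ I, w t * x t) / ∑ t ∈ I, w t else 0

lemma half_mul_sum_le_or_of_weightedMean_lt {w w' x x' m m' : ℕ → ℝ} {I : Finset ℕ} {Δ : ℝ}
    (hw : 0 < ∑ t ∈ I, w t) (hw' : 0 < ∑ t ∈ I, w' t)
    (hlt : weightedMean w' x' I < weightedMean w x I)
    (hgap : weightedMean w m I ≤ weightedMean w' m' I - Δ) :
    Δ / 2 * ∑ t ∈ I, w t ≤ ∑ t ∈ I, w t * (x t - m t) ∨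
      Δ / 2 * ∑ t ∈ I, w' t ≤ ∑ t ∈ I, w' t * (m' t - x' t) := by
  simp only [weightedMean, if_pos hw, if_pos hw'] at hlt hgap
  by_contra! h
  simp only [mul_sub, sum_sub_distrib] at h
  have h1 := (div_lt_iff₀ hw).2 h.1
  have h2 := (div_lt_iff₀ hw').2 h.2
  rw [sub_div] at h1 h2
  linarith

lemma one_le_ofReal_exp_mul_of_weightedMean_lt {B B' X X' : ℕ → Ω → ℝ} {μ μ' : ℕ → ℝ}
    {ω : Ω} {I : Finset ℕ} {v Δ : ℝ}
    (hB : ∀ t, B t ω ∈ Set.Icc (0 : ℝ) 1) (hB' : ∀ t, B' t ω ∈ Set.Icc (0 : ℝ) 1)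
    (hX : ∀ t, X t ω ∈ Set.Icc (0 : ℝ) 1) (hX' : ∀ t, X' t ω ∈ Set.Icc (0 : ℝ) 1)
    (hμ : ∀ t, μ t ∈ Set.Icc (0 : ℝ) 1) (hμ' : ∀ t, μ' t ∈ Set.Icc (0 : ℝ) 1)
    (hΔ : 0 ≤ Δ) (hv : 0 < v) (hV : v ≤ ∑ t ∈ I, B t ω) (hV' : v ≤ ∑ t ∈ I, B' t ω)
    (hlt : weightedMean (B' · ω) (X' · ω) I < weightedMean (B · ω) (X · ω) I)
    (hgap : weightedMean (B · ω) μ I ≤ weightedMean (B' · ω) μ' I - Δ) :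
    1 ≤ ENNReal.ofReal (exp (2 - Δ ^ 2 * v / 2)) *
      (ENNReal.ofReal (exp (hoeffdingExponent B X μ (2 * Δ) (I.erase 0) ω))
        + ENNReal.ofReal (exp (hoeffdingExponent B' X' μ' (-(2 * Δ)) (I.erase 0) ω))) := by
  have key : ∀ {E : ℝ}, Δ ^ 2 * v / 2 ≤ E + 2 →
      1 ≤ ENNReal.ofReal (exp (2 - Δ ^ 2 * v / 2)) * ENNReal.ofReal (exp E) := fun hE => by
    rw [← ENNReal.ofReal_mul (exp_pos _).le, ← exp_add, ENNReal.one_le_ofReal]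
    exact one_le_exp (by linarith)
  rcases half_mul_sum_le_or_of_weightedMean_lt (by linarith) (by linarith) hlt hgap with h | h
  · refine (key ?_).trans (by gcongr; exact le_self_add)
    have := sq_mul_le_hoeffdingExponent (X := X) (μ := μ) (c := 2 * Δ) hV (by nlinarith)
    have := hoeffdingExponent_le_erase_zero_add_two (hB 0) (hX 0) (hμ 0) (2 * Δ) I
    linarith
  · refine (key ?_).trans (by gcongr; exact le_add_self)
    have hneg : ∑ t ∈ I, B' t ω * (μ' t - X' t ω) = -∑ t ∈ I, B' t ω * (X' t ω - μ' t) := by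
      rw [← sum_neg_distrib]
      exact sum_congr rfl fun t _ => by ring
    have := sq_mul_le_hoeffdingExponent (X := X') (μ := μ') (c := -(2 * Δ)) hV' (by nlinarith)
    have := hoeffdingExponent_le_erase_zero_add_two (hB' 0) (hX' 0) (hμ' 0) (-(2 * Δ)) I
    linarith

lemma indep_natural_comap_of_lt {Z Z' : ℕ → Ω → ℝ}
    (hpm : ∀ t, StronglyMeasurable fun ω => (Z t ω, Z' t ω))
    (hindep : iIndepFun (fun p : Bool × ℕ => if p.1 then Z' p.2 else Z p.2) P)
    {n t : ℕ} (hnt : n < t) (b : Bool) :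
    Indep (Filtration.natural _ hpm n)
      (MeasurableSpace.comap (if b then Z' t else Z t) inferInstance) P := by
  set f : Bool × ℕ → Ω → ℝ := fun p => if p.1 then Z' p.2 else Z p.2
  have hf : ∀ p, Measurable (f p) := fun
    | (true, j) => measurable_snd.comp (hpm j).measurable
    | (false, j) => measurable_fst.comp (hpm j).measurable
  have hST : Disjoint {p : Bool × ℕ | p.2 ≤ n} {(b, t)} := by
    rw [Set.disjoint_singleton_right]
    simpa using hnt.not_ge
  have key := indep_iSup_of_disjoint (fun p => (hf p).comap_le) hindep.iIndep hST
  rw [_root_.iSup_singleton] at key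
  refine indep_of_indep_of_le_left key (iSup₂_le fun j hj => ?_)
  refine (MeasurableSpace.comap_prodMk (Z j) (Z' j)).trans_le ?_
  exact sup_le (le_biSup (fun p => MeasurableSpace.comap (f p) _) (i := (false, j)) hj)
    (le_biSup (fun p => MeasurableSpace.comap (f p) _) (i := (true, j)) hj)

lemma sum_ite_le_sum_min_one {W S : Finset ℕ} {p : ℕ → Prop} [DecidablePred p]
    {Λ : ℕ → Set ℕ} {g : ℕ → ℕ → ℝ≥0∞} (hone : ∀ s, (Λ s ∩ W).Subsingleton)
    (hp : ∀ n ∈ W, p n → ∃ s ∈ S, n ∈ Λ s ∧ 1 ≤ g s n) :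
    ∑ n ∈ W, (if p n then 1 else 0) ≤ ∑ s ∈ S, min 1 (∑ n ∈ W, g s n) := by
  calc ∑ n ∈ W, (if p n then 1 else 0)
      ≤ ∑ n ∈ W, ∑ s ∈ S, (if n ∈ Λ s ∧ 1 ≤ g s n then (1 : ℝ≥0∞) else 0) := by
        refine sum_le_sum fun n hn => ?_
        split_ifs with hpn
        · obtain ⟨s, hs, hq⟩ := hp n hn hpn
          exact (if_pos hq).symm.le.trans
            (single_le_sum (f := fun s => if n ∈ Λ s ∧ 1 ≤ g s n then (1 : ℝ≥0∞) else 0)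
              (fun _ _ => zero_le) hs)
        · exact zero_le
    _ = ∑ s ∈ S, ∑ n ∈ W, (if n ∈ Λ s ∧ 1 ≤ g s n then 1 else 0) := sum_comm
    _ ≤ ∑ s ∈ S, min 1 (∑ n ∈ W, g s n) := by
        refine sum_le_sum fun s _ => le_min ?_ (sum_le_sum fun n _ => ?_)
        · rw [sum_boole, Nat.cast_le_one, card_le_one]
          intro n hn n' hn'
          simp only [mem_filter] at hn hn'
          exact hone s ⟨hn'.2.1, hn'.1⟩ ⟨hn.2.1, hn.1⟩ |>.symm
        · split_ifs with h
          exacts [h.2, zero_le]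

lemma lintegral_le_ofReal_sum_min_one [IsProbabilityMeasure P] {f : Ω → ℝ≥0∞}
    {E : ℕ → Ω → ℝ≥0∞} {S W : Finset ℕ} {b : ℝ} {c : ℕ → ℝ} (hb : 0 ≤ b) (hc : ∀ s, 0 ≤ c s)
    (hEm : ∀ n, Measurable (E n)) (hE : ∀ n, ∫⁻ ω, E n ω ∂P ≤ ENNReal.ofReal b)
    (hf : ∀ ω, f ω ≤ ∑ s ∈ S, min 1 (∑ n ∈ W, ENNReal.ofReal (c s) * E n ω)) :
    ∫⁻ ω, f ω ∂P ≤ ENNReal.ofReal (∑ s ∈ S, min 1 (#W * b * c s)) := by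
  calc ∫⁻ ω, f ω ∂P ≤ ∫⁻ ω, ∑ s ∈ S, min 1 (∑ n ∈ W, ENNReal.ofReal (c s) * E n ω) ∂P :=
        lintegral_mono hf
    _ = ∑ s ∈ S, ∫⁻ ω, min 1 (∑ n ∈ W, ENNReal.ofReal (c s) * E n ω) ∂P :=
        lintegral_finsetSum _ fun s _ =>
          measurable_const.min (Finset.measurable_sum _ fun n _ => (hEm n).const_mul _)
    _ ≤ ∑ s ∈ S, min 1 (∑ n ∈ W, ENNReal.ofReal (c s) * ENNReal.ofReal b) := by
        refine sum_le_sum fun s _ => le_min ?_ ?_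
        · exact (lintegral_mono fun _ => min_le_left _ _).trans (by simp)
        · refine (lintegral_mono fun _ => min_le_right _ _).trans ?_
          rw [lintegral_finsetSum _ fun n _ => (hEm n).const_mul _]
          exact sum_le_sum fun n _ =>
            (lintegral_const_mul _ (hEm n)).trans_le (by gcongr; exact hE n)
    _ = ENNReal.ofReal (∑ s ∈ S, min 1 (#W * b * c s)) := by
        rw [ENNReal.ofReal_sum_of_nonneg fun s _ =>
          le_min zero_le_one (by have := hc s; positivity)]
        refine sum_congr rfl fun s _ => ?_
        rw [ENNReal.ofReal_min, ENNReal.ofReal_one, sum_const, nsmul_eq_mul,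
          ENNReal.ofReal_mul (by positivity), ENNReal.ofReal_mul (by positivity),
          ENNReal.ofReal_natCast, mul_comm (ENNReal.ofReal (c s)), mul_assoc]

lemma lintegral_sum_ite_le_card [IsProbabilityMeasure P] (W : Finset ℕ) (p : ℕ → Ω → Prop)
    [∀ n ω, Decidable (p n ω)] :
    ∫⁻ ω, ∑ n ∈ W, (if p n ω then (1 : ℝ≥0∞) else 0) ∂P ≤ #W :=
  (lintegral_mono fun ω => (sum_le_card_nsmul _ _ 1 fun n _ => by split_ifs <;> simp)).trans
    (by simp)

lemma one_div_one_sub_exp_neg_le {a : ℝ} (ha : 0 < a) : 1 / (1 - exp (-a)) ≤ 1 / a + 1 := by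
  have h : exp (-a) * (a + 1) ≤ 1 := by
    calc exp (-a) * (a + 1) ≤ exp (-a) * exp a := by gcongr; exact add_one_le_exp a
      _ = 1 := by rw [← exp_add, neg_add_cancel, exp_zero]
  have h1 : 0 < 1 - exp (-a) := by linarith [exp_lt_one_iff.2 (neg_lt_zero.2 ha)]
  rw [div_add_one ha.ne', div_le_div_iff₀ h1 ha]
  nlinarith

lemma sum_Ioc_min_one_mul_exp_le {K a : ℝ} (hK : 1 ≤ K) (ha : 0 < a) (S : ℕ) :
    ∑ s ∈ Ioc 0 S, min 1 (K * exp (-(a * s))) ≤ (log K + 1) / a + 1 := by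
  set N := ⌊log K / a⌋₊
  set r := exp (-a)
  have hr : r < 1 := exp_lt_one_iff.2 (neg_lt_zero.2 ha)
  have hpow : ∀ s : ℕ, exp (-(a * s)) = r ^ s := fun s => by
    rw [← exp_nat_mul]; ring_nf
  have hhead : ∑ s ∈ Ioc 0 N, min 1 (K * exp (-(a * s))) ≤ log K / a := by
    calc ∑ s ∈ Ioc 0 N, min 1 (K * exp (-(a * s))) ≤ ∑ s ∈ Ioc 0 N, (1 : ℝ) :=
          sum_le_sum fun s _ => min_le_left _ _
      _ = N := by simp
      _ ≤ log K / a := Nat.floor_le (div_nonneg (log_nonneg hK) ha.le)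
  have htail : ∀ M, ∑ s ∈ Ioc N M, min 1 (K * exp (-(a * s))) ≤ 1 / a + 1 := by
    intro M
    have hKr : K * r ^ (N + 1) ≤ 1 := by
      have := Nat.lt_floor_add_one (log K / a)
      rw [div_lt_iff₀ ha] at this
      rw [← hpow, ← exp_log (by linarith : 0 < K), ← exp_add, exp_le_one_iff]
      push_cast
      linarith
    calc ∑ s ∈ Ioc N M, min 1 (K * exp (-(a * s))) ≤ ∑ s ∈ Ico (N + 1) (M + 1), K * r ^ s := by
          rw [Ico_add_one_add_one_eq_Ioc]
          exact sum_le_sum fun s _ => (min_le_right _ _).trans_eq (by rw [hpow])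
      _ = K * ∑ s ∈ Ico (N + 1) (M + 1), r ^ s := by rw [mul_sum]
      _ ≤ K * (r ^ (N + 1) / (1 - r)) := by
          gcongr
          exact geom_sum_Ico_le_of_lt_one (exp_pos _).le hr
      _ ≤ 1 / (1 - r) := by
          rw [← mul_div_assoc]
          exact div_le_div_of_nonneg_right hKr (by linarith)
      _ ≤ 1 / a + 1 := one_div_one_sub_exp_neg_le ha
  calc ∑ s ∈ Ioc 0 S, min 1 (K * exp (-(a * s)))
      ≤ ∑ s ∈ Ioc 0 (max S N), min 1 (K * exp (-(a * s))) :=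
        sum_le_sum_of_subset_of_nonneg (Ioc_subset_Ioc_right (le_max_left _ _))
          fun s _ _ => le_min zero_le_one (by positivity)
    _ = ∑ s ∈ Ioc 0 N, min 1 (K * exp (-(a * s)))
          + ∑ s ∈ Ioc N (max S N), min 1 (K * exp (-(a * s))) :=
        (sum_Ioc_consecutive _ (Nat.zero_le N) (le_max_right _ _)).symm
    _ ≤ log K / a + (1 / a + 1) := add_le_add hhead (htail _)
    _ = (log K + 1) / a + 1 := by ring

lemma sub_three_mul_add_one_le_add_three_mul_log {τ : ℕ} (hτ : 4 ≤ τ) :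
    ((τ : ℝ) - 3) * (3 + log 2) + 1 ≤ (τ + 3) * log τ := by
  have hlog2 := log_two_gt_d9
  have hτ4 : (4 : ℝ) ≤ τ := by exact_mod_cast hτ
  rcases le_or_gt τ 6 with hτ6 | hτ7
  · have hτ6 : (τ : ℝ) ≤ 6 := by exact_mod_cast hτ6
    have h4 : 2 * log 2 ≤ log τ := by
      rw [← log_rpow two_pos]
      exact log_le_log (by norm_num) (by norm_num; linarith)
    nlinarith
  · have hτ7 : (7 : ℝ) ≤ τ := by exact_mod_cast hτ7
    have he : exp 2 < 7.3891 := by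
      have := exp_one_lt_d9
      rw [show (2 : ℝ) = 1 + 1 by norm_num, exp_add]
      nlinarith [exp_pos 1]
    have hτpos : (0 : ℝ) < τ := by linarith
    -- tangent line of `log` at `2 * exp 2`
    have hlog : 1 - 2 * exp 2 / τ ≤ log τ - log 2 - 2 := by
      have := one_sub_inv_le_log_of_pos (x := τ / (2 * exp 2)) (by positivity)
      rwa [inv_div, log_div hτpos.ne' (by positivity), log_mul two_ne_zero (exp_pos 2).ne',
        log_exp, ← sub_sub] at this
    have hcancel : 2 * exp 2 / τ * τ = 2 * exp 2 := div_mul_cancel₀ _ hτpos.ne'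
    have hratio : 2 * exp 2 / τ ≤ 2 * 7.3891 / 7 := by
      rw [div_le_div_iff₀ hτpos (by norm_num)]
      nlinarith
    nlinarith

lemma min_le_two_mul_log_div_add_four (τ : ℕ) {a x : ℝ} (ha : 0 < a)
    (hx : x ≤ (log (2 * exp 2 * (τ + 1)) + 1) / a + 1) :
    min ((τ : ℝ) + 1) x ≤ 2 * log τ / a + 4 := by
  have hlog : 0 ≤ 2 * log τ / a := div_nonneg (mul_nonneg zero_le_two (log_natCast_nonneg τ)) ha.le
  rcases le_or_gt τ 3 with hτ | hτ
  · have hτ3 : (τ : ℝ) ≤ 3 := by exact_mod_cast hτ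
    exact (min_le_left _ _).trans (by linarith)
  have hτ4 : (4 : ℝ) ≤ τ := by exact_mod_cast hτ
  have hτ0 : (0 : ℝ) < τ := by positivity
  have hK : log (2 * exp 2 * (τ + 1)) = log 2 + 2 + log (τ + 1) := by
    rw [log_mul (by positivity) (by positivity), log_mul two_ne_zero (exp_pos 2).ne', log_exp]
  have hsucc : log (τ + 1) ≤ log τ + 1 / τ := by
    have := log_le_sub_one_of_pos (x := (τ + 1) / τ) (by positivity)
    rw [log_div (by positivity) hτ0.ne', add_div, div_self hτ0.ne'] at this
    linarith
  rw [hK] at hx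
  by_cases hA : log 2 + 3 + log (τ + 1) - 2 * log τ ≤ 3 * a
  · refine (min_le_right _ _).trans (hx.trans ?_)
    rw [div_add' _ _ _ ha.ne', div_add' _ _ _ ha.ne', div_le_div_iff_of_pos_right ha]
    linarith
  · refine (min_le_left _ _).trans ?_
    have key := sub_three_mul_add_one_le_add_three_mul_log (τ := τ) (by omega)
    have hfrac : ((τ : ℝ) - 3) * (1 / τ) ≤ 1 := by
      rw [mul_one_div, div_le_one hτ0]
      linarith
    have hsmall : (τ : ℝ) - 3 ≤ 2 * log τ / a := by
      rw [le_div_iff₀ ha]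
      nlinarith
    linarith

lemma lintegral_sum_ite_le_two_mul_log_div_add_four [IsProbabilityMeasure P]
    {p : ℕ → Ω → Prop} [∀ n ω, Decidable (p n ω)] {E : ℕ → Ω → ℝ≥0∞} {n₀ τ S : ℕ} {a : ℝ}
    (ha : 0 < a) (hEm : ∀ n, Measurable (E n)) (hE : ∀ n, ∫⁻ ω, E n ω ∂P ≤ 2)
    (hp : ∀ ω, ∑ n ∈ Icc n₀ (n₀ + τ), (if p n ω then 1 else 0) ≤ ∑ s ∈ Ioc 0 S,
      min 1 (∑ n ∈ Icc n₀ (n₀ + τ), ENNReal.ofReal (exp (2 - a * s)) * E n ω)) :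
    ∫⁻ ω, ∑ n ∈ Icc n₀ (n₀ + τ), (if p n ω then 1 else 0) ∂P
      ≤ ENNReal.ofReal (2 * log τ / a + 4) := by
  have hcard : #(Icc n₀ (n₀ + τ)) = τ + 1 := by rw [Nat.card_Icc]; omega
  have hscales := lintegral_le_ofReal_sum_min_one zero_le_two (fun s => (exp_pos _).le) hEm
    (fun n => (hE n).trans_eq (ENNReal.ofReal_ofNat 2).symm) hp
  have htriv := lintegral_sum_ite_le_card (P := P) (Icc n₀ (n₀ + τ)) p
  rw [hcard, ← ENNReal.ofReal_natCast] at htriv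
  have hsum : ∑ s ∈ Ioc 0 S, min 1 (#(Icc n₀ (n₀ + τ)) * 2 * exp (2 - a * s))
      ≤ (log (2 * exp 2 * (τ + 1)) + 1) / a + 1 := by
    refine (sum_congr rfl fun s _ => ?_).trans_le (sum_Ioc_min_one_mul_exp_le ?_ ha S)
    · rw [hcard, sub_eq_add_neg, exp_add]
      push_cast
      ring_nf
    · nlinarith [add_one_le_exp 2, (Nat.cast_nonneg τ : (0 : ℝ) ≤ τ)]
  calc _ ≤ ENNReal.ofReal (min (τ + 1)
        (∑ s ∈ Ioc 0 S, min 1 (#(Icc n₀ (n₀ + τ)) * 2 * exp (2 - a * s)))) := by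
        rw [ENNReal.ofReal_min]
        exact le_min (by exact_mod_cast htriv) hscales
    _ ≤ _ := ENNReal.ofReal_le_ofReal (min_le_two_mul_log_div_add_four τ ha hsum)

end

theorem stmt_12_general {Ω : Type*} {mΩ : MeasurableSpace Ω} (P : Measure Ω) [IsProbabilityMeasure P]
    (Z Z' : ℕ → Ω → ℝ)
    (hpm : ∀ t, StronglyMeasurable (fun ω => (Z t ω, Z' t ω)))
    (hZb : ∀ t ω, Z t ω ∈ Set.Icc (0 : ℝ) 1) (hZb' : ∀ t ω, Z' t ω ∈ Set.Icc (0 : ℝ) 1)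
    (hindep : iIndepFun
      (fun p : Bool × ℕ => if p.1 then Z' p.2 else Z p.2) P)
    (Bsel Bsel' : ℕ → Ω → ℝ)
    (hB01 : ∀ t ω, Bsel t ω = 0 ∨ Bsel t ω = 1)
    (hB01' : ∀ t ω, Bsel' t ω = 0 ∨ Bsel' t ω = 1)
    (hBm : ∀ t, Measurable[(MeasureTheory.Filtration.natural _ hpm) (t - 1)] (Bsel t))
    (hBm' : ∀ t, Measurable[(MeasureTheory.Filtration.natural _ hpm) (t - 1)] (Bsel' t))
    (n₀ τ : ℕ) (ε Δ : ℝ) (hε : 0 < ε) (hΔ : 0 < Δ)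
    (Λ : Ω → Set ℕ) (Λs : ℕ → Ω → Set ℕ)
    (hsub : ∀ ω, Λ ω ⊆ ⋃ s ∈ Set.Ici 1, Λs s ω)
    (hbig : ∀ s : ℕ, ∀ ω, ∀ n ∈ Λs s ω,
      ε * (s : ℝ) ≤ ∑ t ∈ Finset.Icc (n - τ) n, Bsel t ω)
    (hbig' : ∀ s : ℕ, ∀ ω, ∀ n ∈ Λs s ω,
      ε * (s : ℝ) ≤ ∑ t ∈ Finset.Icc (n - τ) n, Bsel' t ω)
    (hone : ∀ s ω, (Λs s ω ∩ Set.Icc n₀ (n₀ + τ)).Subsingleton)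
    -- the (conditional) window means of the two arms are separated by Δ on Λ
    (hgap : ∀ ω, ∀ n ∈ Λ ω,
      (if 0 < ∑ t ∈ Finset.Icc (n - τ) n, Bsel t ω then
        (∑ t ∈ Finset.Icc (n - τ) n, Bsel t ω * (∫ x, Z t x ∂P)) /
          (∑ t ∈ Finset.Icc (n - τ) n, Bsel t ω)
      else 0) ≤
      (if 0 < ∑ t ∈ Finset.Icc (n - τ) n, Bsel' t ω then
        (∑ t ∈ Finset.Icc (n - τ) n, Bsel' t ω * (∫ x, Z' t x ∂P)) /
          (∑ t ∈ Finset.Icc (n - τ) n, Bsel' t ω)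
      else 0) - Δ) :
    ∫⁻ ω, ∑ n ∈ Finset.Icc n₀ (n₀ + τ),
        (if n ∈ Λ ω ∧
            (if 0 < ∑ t ∈ Finset.Icc (n - τ) n, Bsel' t ω then
              (∑ t ∈ Finset.Icc (n - τ) n, Bsel' t ω * Z' t ω) /
                (∑ t ∈ Finset.Icc (n - τ) n, Bsel' t ω)
            else 0) <
            (if 0 < ∑ t ∈ Finset.Icc (n - τ) n, Bsel t ω then
              (∑ t ∈ Finset.Icc (n - τ) n, Bsel t ω * Z t ω) /
                (∑ t ∈ Finset.Icc (n - τ) n, Bsel t ω)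
            else 0)
          then (1 : ℝ≥0∞) else 0) ∂P
      ≤ ENNReal.ofReal (4 * Real.log τ / (ε * Δ ^ 2) + 4) := by
  set F := Filtration.natural (fun t ω => (Z t ω, Z' t ω)) hpm
  have hZF : ∀ t, Measurable[F t] (Z t) := fun t =>
    measurable_fst.comp (Filtration.stronglyAdapted_natural hpm t).measurable
  have hZ'F : ∀ t, Measurable[F t] (Z' t) := fun t =>
    measurable_snd.comp (Filtration.stronglyAdapted_natural hpm t).measurable
  have hB : ∀ t ω, Bsel t ω ∈ Set.Icc (0 : ℝ) 1 := fun t ω => by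
    rcases hB01 t ω with h | h <;> simp [h]
  have hB' : ∀ t ω, Bsel' t ω ∈ Set.Icc (0 : ℝ) 1 := fun t ω => by
    rcases hB01' t ω with h | h <;> simp [h]
  -- Chernoff majorants of the deviations of the two arms in the window ending at `n`
  set E₁ : ℕ → Ω → ℝ≥0∞ := fun n ω => ENNReal.ofReal (exp (hoeffdingExponent Bsel Z
    (fun t => P[Z t]) (2 * Δ) ((Icc (n - τ) n).erase 0) ω))
  set E₂ : ℕ → Ω → ℝ≥0∞ := fun n ω => ENNReal.ofReal (exp (hoeffdingExponent Bsel' Z'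
    (fun t => P[Z' t]) (-(2 * Δ)) ((Icc (n - τ) n).erase 0) ω))
  have hE₁m : ∀ n, Measurable (E₁ n) := fun n => (measurable_hoeffdingExponent
    (fun t _ => (hBm t).mono (F.le _) le_rfl) (fun t _ => (hZF t).mono (F.le t) le_rfl)
    _ _).exp.ennreal_ofReal
  have hE₂m : ∀ n, Measurable (E₂ n) := fun n => (measurable_hoeffdingExponent
    (fun t _ => (hBm' t).mono (F.le _) le_rfl) (fun t _ => (hZ'F t).mono (F.le t) le_rfl)
    _ _).exp.ennreal_ofReal
  have hE : ∀ n, ∫⁻ ω, E₁ n ω + E₂ n ω ∂P ≤ 2 := fun n => by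
    rw [lintegral_add_left (hE₁m n), ← one_add_one_eq_two]
    gcongr
    · exact lintegral_exp_hoeffdingExponent_le_one F hB (fun t => hBm (t + 1)) hZF hZb
        (fun t => by simpa using indep_natural_comap_of_lt hpm hindep t.lt_succ_self false)
        _ (notMem_erase 0 _)
    · exact lintegral_exp_hoeffdingExponent_le_one F hB' (fun t => hBm' (t + 1)) hZ'F hZb'
        (fun t => by simpa using indep_natural_comap_of_lt hpm hindep t.lt_succ_self true)
        _ (notMem_erase 0 _)
  refine (lintegral_sum_ite_le_two_mul_log_div_add_four (a := ε * Δ ^ 2 / 2)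
    (S := ⌊(τ + 1) / ε⌋₊) (E := fun n ω => E₁ n ω + E₂ n ω)
    (p := fun n ω => n ∈ Λ ω ∧ weightedMean (Bsel' · ω) (Z' · ω) (Icc (n - τ) n)
      < weightedMean (Bsel · ω) (Z · ω) (Icc (n - τ) n))
    (by positivity) (fun n => (hE₁m n).add (hE₂m n)) hE fun ω => ?_).trans_eq
    (by congr 1; field_simp; ring)
  refine sum_ite_le_sum_min_one (Λ := (Λs · ω)) (fun s => by simpa using hone s ω)
    fun n _ hbad => ?_
  obtain ⟨s, hs, hns⟩ := Set.mem_iUnion₂.1 (hsub ω hbad.1)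
  have hv := hbig s ω n hns
  refine ⟨s, mem_Ioc.2 ⟨hs, Nat.le_floor ?_⟩, hns, ?_⟩
  · rw [le_div_iff₀ hε, mul_comm]
    exact hv.trans (sum_Icc_sub_le_add_one (fun t => (hB t ω).2) n τ)
  · rw [show ε * Δ ^ 2 / 2 * s = Δ ^ 2 * (ε * s) / 2 by ring]
    exact one_le_ofReal_exp_mul_of_weightedMean_lt (hB · ω) (hB' · ω) (hZb · ω) (hZb' · ω)
      (fun t => integral_mem_Icc_zero_one (hZb t)) (fun t => integral_mem_Icc_zero_one (hZb' t))
      hΔ.le (mul_pos hε (Nat.cast_pos.2 hs)) hv (hbig' s ω n hns) hbad.2 (hgap ω n hbad.1)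

theorem stmt_12 {Ω : Type*} {mΩ : MeasurableSpace Ω} (P : Measure Ω) [IsProbabilityMeasure P]
    (Z Z' : ℕ → Ω → ℝ)
    (hpm : ∀ t, StronglyMeasurable (fun ω => (Z t ω, Z' t ω)))
    (hZb : ∀ t ω, Z t ω ∈ Set.Icc (0 : ℝ) 1) (hZb' : ∀ t ω, Z' t ω ∈ Set.Icc (0 : ℝ) 1)
    (hindep : iIndepFun
      (fun p : Bool × ℕ => if p.1 then Z' p.2 else Z p.2) P)
    (Bsel Bsel' : ℕ → Ω → ℝ)
    (hB01 : ∀ t ω, Bsel t ω = 0 ∨ Bsel t ω = 1)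
    (hB01' : ∀ t ω, Bsel' t ω = 0 ∨ Bsel' t ω = 1)
    (hBm : ∀ t, Measurable[(MeasureTheory.Filtration.natural _ hpm) (t - 1)] (Bsel t))
    (hBm' : ∀ t, Measurable[(MeasureTheory.Filtration.natural _ hpm) (t - 1)] (Bsel' t))
    (n₀ τ : ℕ) (ε Δ : ℝ) (hε : 0 < ε) (hΔ : 0 < Δ)
    (Λ : Ω → Set ℕ) (Λs : ℕ → Ω → Set ℕ)
    (hsub : ∀ ω, Λ ω ⊆ ⋃ s ∈ Set.Ici 1, Λs s ω)
    (hbig : ∀ s : ℕ, ∀ ω, ∀ n ∈ Λs s ω,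
      ε * (s : ℝ) ≤ ∑ t ∈ Finset.Icc (n - τ) n, Bsel t ω)
    (hbig' : ∀ s : ℕ, ∀ ω, ∀ n ∈ Λs s ω,
      ε * (s : ℝ) ≤ ∑ t ∈ Finset.Icc (n - τ) n, Bsel' t ω)
    (hone : ∀ s ω, (Λs s ω ∩ Set.Icc n₀ (n₀ + τ)).Subsingleton)
    (hmeasΛ : ∀ s n,
      MeasurableSet[(MeasureTheory.Filtration.natural _ hpm) n] {ω | n ∈ Λs s ω})
    -- the (conditional) window means of the two arms are separated by Δ on Λ
    (hgap : ∀ ω, ∀ n ∈ Λ ω,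
      (if 0 < ∑ t ∈ Finset.Icc (n - τ) n, Bsel t ω then
        (∑ t ∈ Finset.Icc (n - τ) n, Bsel t ω * (∫ x, Z t x ∂P)) /
          (∑ t ∈ Finset.Icc (n - τ) n, Bsel t ω)
      else 0) ≤
      (if 0 < ∑ t ∈ Finset.Icc (n - τ) n, Bsel' t ω then
        (∑ t ∈ Finset.Icc (n - τ) n, Bsel' t ω * (∫ x, Z' t x ∂P)) /
          (∑ t ∈ Finset.Icc (n - τ) n, Bsel' t ω)
      else 0) - Δ) :
    ∫⁻ ω, ∑ n ∈ Finset.Icc n₀ (n₀ + τ),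
        (if n ∈ Λ ω ∧
            (if 0 < ∑ t ∈ Finset.Icc (n - τ) n, Bsel' t ω then
              (∑ t ∈ Finset.Icc (n - τ) n, Bsel' t ω * Z' t ω) /
                (∑ t ∈ Finset.Icc (n - τ) n, Bsel' t ω)
            else 0) <
            (if 0 < ∑ t ∈ Finset.Icc (n - τ) n, Bsel t ω then
              (∑ t ∈ Finset.Icc (n - τ) n, Bsel t ω * Z t ω) /
                (∑ t ∈ Finset.Icc (n - τ) n, Bsel t ω)
            else 0)
          then (1 : ℝ≥0∞) else 0) ∂P
      ≤ ENNReal.ofReal (4 * Real.log τ / (ε * Δ ^ 2) + 4) :=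
  stmt_12_general (mΩ := mΩ) P Z Z' hpm hZb hZb' hindep Bsel Bsel' hB01 hB01' hBm hBm' n₀ τ ε Δ hε
    hΔ Λ Λs hsub hbig hbig' hone hgap
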